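/- For odd c ≥ 3, the majority voting attack at bias p = 1/2 yields a = 1/2, a₁ = 1/2 + δ_c, and a₀ = 1/2 - δ_c, where δ_c = (1/2)·C(c-1, (c-1)/2)·2^{-(c-1)}. Moreover lim_{c→∞} c·δ_c² = 1/(2π). -/

import Mathlib

open Real Filter Finset

/-- `δ_c = (1/2) C(c-1,(c-1)/2) 2^{-(c-1)}`. -/
noncomputable def majDelta (c : ℕ) : ℝ := (1/2) * ((c-1).choose ((c-1)/2) : ℝ) * (2:ℝ)^(-((c : ℝ) - 1))

/-!
The reflection `z ↦ n - z` preserves `C(n, z)` and swaps the lower and upper halves of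
`range (n + 1)`, so twice the upper tail plus the middle term is `2 ^ n`; the middle term is
absent for odd `n` and is the central binomial coefficient for even `n`. With `c = 2m + 1`,
Wallis' formula `W m = 16 ^ m / ((2m + 1) C(2m, m) ^ 2)` makes `c δ_c ^ 2 = 1 / (4 W m)` exact,
and `W m → π / 2`.
-/

open Nat (centralBinom)

namespace Nat

theorem sum_choose_filter_two_mul_lt (n : ℕ) :
    ∑ z ∈ range (n + 1) with 2 * z < n, n.choose z
      = ∑ z ∈ range (n + 1) with n < 2 * z, n.choose z := by
  refine sum_nbij' (n - ·) (n - ·) ?_ ?_ ?_ ?_ ?_ <;> intro z hz <;>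
    simp only [mem_filter, mem_range] at hz ⊢
  any_goals omega
  exact (choose_symm (by omega)).symm

theorem sum_choose_filter_le_two_mul (n : ℕ) :
    ∑ z ∈ range (n + 1) with n ≤ 2 * z, n.choose z
      = ∑ z ∈ range (n + 1) with 2 * z = n, n.choose z
        + ∑ z ∈ range (n + 1) with n < 2 * z, n.choose z := by
  rw [← sum_union (disjoint_filter.2 fun _ _ _ => by omega), ← filter_or]
  exact sum_congr (filter_congr fun _ _ => by omega) fun _ _ => rfl

theorem two_mul_sum_choose_filter_lt_two_mul_add (n : ℕ) :
    2 * ∑ z ∈ range (n + 1) with n < 2 * z, n.choose z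
      + ∑ z ∈ range (n + 1) with 2 * z = n, n.choose z = 2 ^ n := by
  rw [← sum_range_choose, ← sum_filter_add_sum_filter_not (range (n + 1)) (2 * · < n),
    sum_choose_filter_two_mul_lt]
  simp only [not_lt]
  rw [sum_choose_filter_le_two_mul]
  ring

theorem sum_choose_filter_lt_two_mul_odd (k : ℕ) :
    ∑ z ∈ range (2 * k + 2) with 2 * k + 1 < 2 * z, (2 * k + 1).choose z = 4 ^ k := by
  have h := two_mul_sum_choose_filter_lt_two_mul_add (2 * k + 1)
  have hmid : (range (2 * k + 2)).filter (2 * · = 2 * k + 1) = ∅ :=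
    filter_false_of_mem fun _ _ => by omega
  rw [hmid, sum_empty, pow_succ, pow_mul] at h
  norm_num at h
  linarith

theorem sum_choose_filter_two_mul_eq_even (k : ℕ) :
    ∑ z ∈ range (2 * k + 1) with 2 * z = 2 * k, (2 * k).choose z = centralBinom k := by
  have hmid : (range (2 * k + 1)).filter (2 * · = 2 * k) = {k} := by
    ext z; simp only [mem_filter, mem_range, mem_singleton]; omega
  rw [hmid, sum_singleton, centralBinom_eq_two_mul_choose]

theorem sum_choose_filter_even_le (k : ℕ) :
    ∑ z ∈ range (2 * k + 1) with 2 * k ≤ 2 * z, (2 * k).choose z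
      = centralBinom k + ∑ z ∈ range (2 * k + 1) with 2 * k < 2 * z, (2 * k).choose z := by
  rw [sum_choose_filter_le_two_mul, sum_choose_filter_two_mul_eq_even]

theorem two_mul_sum_choose_filter_lt_two_mul_even_add_centralBinom (k : ℕ) :
    2 * ∑ z ∈ range (2 * k + 1) with 2 * k < 2 * z, (2 * k).choose z + centralBinom k
      = 4 ^ k := by
  rw [← sum_choose_filter_two_mul_eq_even, two_mul_sum_choose_filter_lt_two_mul_add, pow_mul]
  norm_num

end Nat

theorem sum_natCast_mul_ite_one_zero (s : Finset ℕ) (p : ℕ → Prop) [DecidablePred p]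
    (f : ℕ → ℕ) (r : ℝ) :
    ∑ z ∈ s, (f z : ℝ) * r * (if p z then 1 else 0)
      = ((∑ z ∈ s with p z, f z : ℕ) : ℝ) * r := by
  simp only [mul_ite, mul_one, mul_zero, ← sum_filter, Nat.cast_sum, sum_mul]

theorem one_div_two_pow_two_mul (k : ℕ) : (1 / 2 : ℝ) ^ (2 * k) = (4 ^ k)⁻¹ := by
  rw [pow_mul, ← inv_pow]; norm_num

theorem majDelta_two_mul_add_one (k : ℕ) :
    majDelta (2 * k + 1) = centralBinom k / (2 * 4 ^ k) := by
  have hexp : -(((2 * k + 1 : ℕ) : ℝ) - 1) = -((2 * k : ℕ) : ℝ) := by push_cast; ring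
  rw [majDelta, Nat.add_sub_cancel, Nat.mul_div_cancel_left k two_pos,
    ← Nat.centralBinom_eq_two_mul_choose, hexp, rpow_neg zero_le_two, rpow_natCast, pow_mul]
  norm_num
  ring

theorem majority_a (k : ℕ) :
    ∑ z ∈ range (2 * k + 1 + 1), ((2 * k + 1).choose z : ℝ) * (1 / 2) ^ (2 * k + 1) *
      (if 2 * k + 1 < 2 * z then (1 : ℝ) else 0) = 1 / 2 := by
  rw [sum_natCast_mul_ite_one_zero, Nat.sum_choose_filter_lt_two_mul_odd]
  push_cast
  rw [pow_succ, one_div_two_pow_two_mul]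
  field_simp

theorem majority_a₀ (k : ℕ) :
    ∑ z ∈ range (2 * k + 1), ((2 * k).choose z : ℝ) * (1 / 2) ^ (2 * k) *
      (if 2 * k + 1 < 2 * z then (1 : ℝ) else 0) = 1 / 2 - majDelta (2 * k + 1) := by
  have hfilter : (range (2 * k + 1)).filter (2 * k + 1 < 2 * ·)
      = (range (2 * k + 1)).filter (2 * k < 2 * ·) :=
    filter_congr fun _ _ => by omega
  have h : (2 * (∑ z ∈ range (2 * k + 1) with 2 * k < 2 * z, (2 * k).choose z : ℕ) : ℝ)
      + centralBinom k = 4 ^ k := by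
    exact_mod_cast Nat.two_mul_sum_choose_filter_lt_two_mul_even_add_centralBinom k
  rw [sum_natCast_mul_ite_one_zero, hfilter, majDelta_two_mul_add_one, one_div_two_pow_two_mul]
  field_simp
  linarith

theorem majority_a₁ (k : ℕ) :
    ∑ z ∈ Icc 1 (2 * k + 1), ((2 * k).choose (z - 1) : ℝ) * (1 / 2) ^ (2 * k) *
      (if 2 * k + 1 < 2 * z then (1 : ℝ) else 0) = 1 / 2 + majDelta (2 * k + 1) := by
  have hshift : Icc 1 (2 * k + 1) = (range (2 * k + 1)).map (addRightEmbedding 1) := by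
    rw [Nat.range_succ_eq_Icc_zero, map_add_right_Icc]
  have hfilter : (range (2 * k + 1)).filter (fun z => 2 * k + 1 < 2 * (z + 1))
      = (range (2 * k + 1)).filter (2 * k ≤ 2 * ·) :=
    filter_congr fun _ _ => by omega
  have h : (2 * (∑ z ∈ range (2 * k + 1) with 2 * k < 2 * z, (2 * k).choose z : ℕ) : ℝ)
      + centralBinom k = 4 ^ k := by
    exact_mod_cast Nat.two_mul_sum_choose_filter_lt_two_mul_even_add_centralBinom k
  rw [hshift, sum_map]
  simp only [addRightEmbedding_apply, Nat.add_sub_cancel]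
  rw [sum_natCast_mul_ite_one_zero, hfilter, Nat.sum_choose_filter_even_le,
    majDelta_two_mul_add_one, one_div_two_pow_two_mul, Nat.cast_add]
  field_simp
  linarith

theorem Real.Wallis.W_eq_sixteen_pow_div_centralBinom_sq (n : ℕ) :
    Real.Wallis.W n = 16 ^ n / ((2 * n + 1) * centralBinom n ^ 2) := by
  have h : (centralBinom n : ℝ) * n.factorial * n.factorial = (2 * n).factorial := by
    have := Nat.choose_mul_factorial_mul_factorial (Nat.le_mul_of_pos_left n two_pos)
    rw [show 2 * n - n = n by omega] at this
    rw [Nat.centralBinom_eq_two_mul_choose]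
    exact_mod_cast this
  rw [Real.Wallis.W_eq_factorial_ratio, ← h, pow_mul]
  have := Nat.factorial_pos n
  field_simp
  norm_num

theorem mul_majDelta_sq (m : ℕ) :
    ((2 * m + 1 : ℕ) : ℝ) * majDelta (2 * m + 1) ^ 2 = (4 * Real.Wallis.W m)⁻¹ := by
  rw [majDelta_two_mul_add_one, Real.Wallis.W_eq_sixteen_pow_div_centralBinom_sq]
  have := Nat.centralBinom_pos m
  rw [show (16 : ℝ) = 4 ^ 2 by norm_num, ← pow_mul]
  push_cast
  field_simp
  ring

theorem tendsto_mul_majDelta_sq :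
    Tendsto (fun m : ℕ => ((2 * m + 1 : ℕ) : ℝ) * majDelta (2 * m + 1) ^ 2) atTop
      (nhds (1 / (2 * π))) := by
  have h := (Real.Wallis.tendsto_W_nhds_pi_div_two.const_mul 4).inv₀ (by positivity)
  simp only [← mul_majDelta_sq] at h
  convert h using 2
  ring

/-- For odd `c ≥ 3`, majority voting at `p = 1/2` gives `a = 1/2`, `a₁ = 1/2 + δ_c`,
`a₀ = 1/2 - δ_c`, and `c δ_c² → 1/(2π)` along odd coalition sizes. -/
theorem stmt17 :
    (∀ c : ℕ, Odd c → 3 ≤ c →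
      (∑ z ∈ Finset.range (c+1), (c.choose z : ℝ) * (1/2)^c *
          (if c < 2 * z then (1:ℝ) else 0)) = 1/2 ∧
      (∑ z ∈ Finset.Icc 1 c, ((c-1).choose (z-1) : ℝ) * (1/2)^(c-1) *
          (if c < 2 * z then (1:ℝ) else 0)) = 1/2 + majDelta c ∧
      (∑ z ∈ Finset.range c, ((c-1).choose z : ℝ) * (1/2)^(c-1) *
          (if c < 2 * z then (1:ℝ) else 0)) = 1/2 - majDelta c) ∧
    Tendsto (fun m : ℕ => ((2*m+1 : ℕ) : ℝ) * (majDelta (2*m+1))^2)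
      atTop (nhds (1 / (2 * Real.pi))) := by
  refine ⟨fun c hc _ => ?_, tendsto_mul_majDelta_sq⟩
  obtain ⟨k, rfl⟩ := hc
  rw [Nat.add_sub_cancel]
  exact ⟨majority_a k, majority_a₁ k, majority_a₀ k⟩
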